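/- For integers k ≥ 1 and l ≥ 1, the number of closed l-walks in the Fibonacci digraph F(2,k) satisfies C_l(2,k) = φ^l + ψ^l, where φ = (1 + √5)/2 and ψ = (1 − √5)/2; that is, the trace of the l-th power of the adjacency matrix of F(2,k), viewed as a real number, equals ((1 + √5)/2)^l + ((1 − √5)/2)^l. -/

import Mathlib

/-- A vertex of the d-Fibonacci digraph F(d,k): a sequence x : Fin k → ZMod d
such that whenever a digit is nonzero, the next digit is its successor mod d. -/
def fibIsVertex (d k : ℕ) (x : Fin k → ZMod d) : Prop :=
  ∀ (i : ℕ) (h : i + 1 < k),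
    x ⟨i, Nat.lt_of_succ_lt h⟩ ≠ 0 →
      x ⟨i + 1, h⟩ = x ⟨i, Nat.lt_of_succ_lt h⟩ + 1

/-- The arc relation of F(d,k): y is the left shift of x, and if the last digit
of x is nonzero then the last digit of y is its successor mod d. -/
def fibArc (d k : ℕ) (x y : Fin k → ZMod d) : Prop :=
  (∀ (i : ℕ) (h : i + 1 < k), y ⟨i, Nat.lt_of_succ_lt h⟩ = x ⟨i + 1, h⟩) ∧
  (∀ h : 0 < k, x ⟨k - 1, Nat.sub_lt h Nat.one_pos⟩ ≠ 0 →
    y ⟨k - 1, Nat.sub_lt h Nat.one_pos⟩ = x ⟨k - 1, Nat.sub_lt h Nat.one_pos⟩ + 1)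

attribute [local instance] Classical.propDecidable

/-- The adjacency matrix of F(2,k), as a real matrix. -/
noncomputable def fibAdjMatrixR (k : ℕ) :
    Matrix {x : Fin k → ZMod 2 // fibIsVertex 2 k x}
           {x : Fin k → ZMod 2 // fibIsVertex 2 k x} ℝ :=
  fun x y => if fibArc 2 k x.1 y.1 then 1 else 0

/-! Auxiliary development -/

abbrev FibV (k : ℕ) := {x : Fin k → ZMod 2 // fibIsVertex 2 k x}

def suffFun {k : ℕ} (x : Fin (k+1) → ZMod 2) : Fin k → ZMod 2 := fun i => x i.succ
def preFun {k : ℕ} (x : Fin (k+1) → ZMod 2) : Fin k → ZMod 2 := fun i => x i.castSucc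

lemma zmod2_cases (a : ZMod 2) : a = 0 ∨ a = 1 := by revert a; decide

lemma suff_vertex {k : ℕ} {x : Fin (k+1) → ZMod 2} (hx : fibIsVertex 2 (k+1) x) :
    fibIsVertex 2 k (suffFun x) := by
  intro i h hne
  have h2 : i + 1 + 1 < k + 1 := Nat.succ_lt_succ h
  have := hx (i+1) h2
  simp only [suffFun] at hne ⊢
  have e1 : (⟨i, Nat.lt_of_succ_lt h⟩ : Fin k).succ = ⟨i+1, Nat.lt_of_succ_lt h2⟩ := rfl
  have e2 : (⟨i+1, h⟩ : Fin k).succ = ⟨i+1+1, h2⟩ := rfl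
  rw [e1, e2]
  rw [e1] at hne
  exact this hne

lemma pre_vertex {k : ℕ} {x : Fin (k+1) → ZMod 2} (hx : fibIsVertex 2 (k+1) x) :
    fibIsVertex 2 k (preFun x) := by
  intro i h hne
  have h2 : i + 1 < k + 1 := Nat.lt_of_succ_lt (Nat.succ_lt_succ h)
  simp only [preFun] at hne ⊢
  have e1 : (⟨i, Nat.lt_of_succ_lt h⟩ : Fin k).castSucc = ⟨i, Nat.lt_of_succ_lt h2⟩ := rfl
  have e2 : (⟨i+1, h⟩ : Fin k).castSucc = ⟨i+1, h2⟩ := rfl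
  rw [e1, e2]
  rw [e1] at hne
  exact hx i h2 hne

lemma arc_iff {k : ℕ} (hk : 1 ≤ k) (x y : FibV (k+1)) :
    fibArc 2 (k+1) x.1 y.1 ↔ preFun y.1 = suffFun x.1 := by
  constructor
  · rintro ⟨h1, _⟩
    funext i
    have hi : (i : ℕ) + 1 < k + 1 := Nat.succ_lt_succ i.2
    have := h1 i hi
    simpa [preFun, suffFun, Fin.castSucc, Fin.castAdd, Fin.castLE, Fin.succ, Fin.ext_iff] using this
  · intro hpe
    constructor
    · intro i h
      have hik : i < k := Nat.lt_of_succ_lt_succ h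
      have := congrFun hpe ⟨i, hik⟩
      simpa [preFun, suffFun, Fin.castSucc, Fin.succ, Fin.ext_iff] using this
    · intro h0 hne
      -- last digit of x is 1
      have hsub : k + 1 - 1 = k := rfl
      have hk1 : k - 1 + 1 = k := Nat.succ_pred_eq_of_pos hk
      have hxk : x.1 ⟨k, Nat.lt_succ_self k⟩ ≠ 0 := by
        convert hne using 2
        exact Fin.ext hsub.symm
      have hx1 : x.1 ⟨k, Nat.lt_succ_self k⟩ = 1 := by
        rcases zmod2_cases (x.1 ⟨k, Nat.lt_succ_self k⟩) with h | h
        · exact absurd h hxk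
        · exact h
      -- y at position k-1 equals x at k
      have hy : y.1 ⟨k - 1, by omega⟩ = x.1 ⟨k, Nat.lt_succ_self k⟩ := by
        have := congrFun hpe ⟨k - 1, by omega⟩
        simpa [preFun, suffFun, Fin.castSucc, Fin.succ, Fin.ext_iff, hk1] using this
      have hyv := y.2 (k - 1) (by omega)
      have hyk : y.1 ⟨k - 1 + 1, by omega⟩ = y.1 ⟨k - 1, by omega⟩ + 1 := by
        apply hyv
        rw [hy, hx1]; decide
      have : y.1 ⟨k, by omega⟩ = 1 + 1 := by
        have e : (⟨k - 1 + 1, by omega⟩ : Fin (k+1)) = ⟨k, by omega⟩ := by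
          simp [Fin.ext_iff, hk1]
        rw [e] at hyk
        rw [hyk, hy, hx1]
      have hfin : y.1 ⟨k + 1 - 1, Nat.sub_lt (Nat.succ_pos k) Nat.one_pos⟩
          = x.1 ⟨k + 1 - 1, Nat.sub_lt (Nat.succ_pos k) Nat.one_pos⟩ + 1 := by
        have e : (⟨k + 1 - 1, Nat.sub_lt (Nat.succ_pos k) Nat.one_pos⟩ : Fin (k+1))
            = ⟨k, Nat.lt_succ_self k⟩ := by simp [Fin.ext_iff]
        rw [e, this, hx1]
      exact hfin

noncomputable def Bmat (k : ℕ) : Matrix (FibV (k+1)) (FibV k) ℝ :=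
  fun x m => if m.1 = suffFun x.1 then 1 else 0

noncomputable def Cmat (k : ℕ) : Matrix (FibV k) (FibV (k+1)) ℝ :=
  fun m y => if preFun y.1 = m.1 then 1 else 0

lemma factor1 {k : ℕ} (hk : 1 ≤ k) : fibAdjMatrixR (k+1) = Bmat k * Cmat k := by
  funext x y
  have hs : fibIsVertex 2 k (suffFun x.1) := suff_vertex x.2
  set m₀ : FibV k := ⟨suffFun x.1, hs⟩ with hm₀
  have : (Bmat k * Cmat k) x y
      = (if (m₀.1 : Fin k → ZMod 2) = suffFun x.1 then (1:ℝ) else 0) *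
        (if preFun y.1 = m₀.1 then 1 else 0) := by
    rw [Matrix.mul_apply]
    apply Fintype.sum_eq_single m₀
    intro m hm
    have : m.1 ≠ suffFun x.1 := fun h => hm (Subtype.ext h)
    simp [Bmat, this]
  rw [this, if_pos rfl, one_mul]
  by_cases h : fibArc 2 (k+1) x.1 y.1
  · rw [fibAdjMatrixR, if_pos h, if_pos ((arc_iff hk x y).mp h)]
  · rw [fibAdjMatrixR, if_neg h, if_neg (fun he => h ((arc_iff hk x y).mpr he))]

lemma factor2 {k : ℕ} (hk : 1 ≤ k) : fibAdjMatrixR k = Cmat k * Bmat k := by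
  funext m n
  have hk1 : k - 1 + 1 = k := Nat.succ_pred_eq_of_pos hk
  by_cases hA : fibArc 2 k m.1 n.1
  · -- unique y exists
    set yf : Fin (k+1) → ZMod 2 :=
      fun j => if h : (j : ℕ) < k then m.1 ⟨j, h⟩ else n.1 ⟨k-1, Nat.sub_lt hk Nat.one_pos⟩
      with hyf
    have hyv : fibIsVertex 2 (k+1) yf := by
      intro i h hne
      by_cases hik : i + 1 < k
      · have hik' : i < k := Nat.lt_of_succ_lt hik
        simp only [hyf, dif_pos hik, dif_pos hik'] at hne ⊢
        exact m.2 i hik hne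
      · have hik' : i + 1 = k := by omega
        have hi : i < k := by omega
        simp only [hyf, dif_pos hi, dif_neg (by omega : ¬ (i+1 < k))] at hne ⊢
        have := hA.2 (by omega)
        have e : (⟨k-1, Nat.sub_lt hk Nat.one_pos⟩ : Fin k) = ⟨i, hi⟩ := by
          simp [Fin.ext_iff]; omega
        rw [e] at this ⊢
        exact this hne
    set y₀ : FibV (k+1) := ⟨yf, hyv⟩ with hy₀
    have key : (Cmat k * Bmat k) m n
        = (if preFun y₀.1 = m.1 then (1:ℝ) else 0) * (if n.1 = suffFun y₀.1 then 1 else 0) := by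
      rw [Matrix.mul_apply]
      apply Fintype.sum_eq_single y₀
      intro y hy
      rcases Classical.em (preFun y.1 = m.1 ∧ n.1 = suffFun y.1) with ⟨h1, h2⟩ | h3
      · exfalso; apply hy; apply Subtype.ext
        funext j
        rcases j with ⟨j, hj⟩
        by_cases hjk : j < k
        · have := congrFun h1 ⟨j, hjk⟩
          simp only [preFun, Fin.castSucc, Fin.castAdd, Fin.castLE] at this
          simp only [hy₀, hyf, dif_pos hjk]
          exact this
        · have hjk' : j = k := by omega
          subst hjk'
          have := congrFun h2 ⟨j - 1, Nat.sub_lt hk Nat.one_pos⟩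
          simp only [suffFun, Fin.succ] at this
          simp only [hy₀, hyf, dif_neg (by omega : ¬ (j < j))]
          exact (this.trans (congrArg y.1 (Fin.ext (show j - 1 + 1 = j by omega)))).symm
      · rcases Classical.em (preFun y.1 = m.1) with h1 | h1
        · have h2 : n.1 ≠ suffFun y.1 := fun h => h3 ⟨h1, h⟩
          simp [Cmat, Bmat, h2]
        · simp [Cmat, Bmat, h1]
    rw [key]
    have hp : preFun y₀.1 = m.1 := by
      funext i
      simp only [preFun, hy₀, hyf, Fin.castSucc, Fin.castAdd, Fin.castLE]
      rw [dif_pos i.2]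
    have hsfy : n.1 = suffFun y₀.1 := by
      funext i
      rcases i with ⟨i, hi⟩
      simp only [suffFun, hy₀, hyf, Fin.succ]
      by_cases hik : i + 1 < k
      · rw [dif_pos hik]
        exact hA.1 i hik
      · have hik' : i + 1 = k := by omega
        rw [dif_neg (by omega : ¬ (i + 1 < k))]
        exact congrArg n.1 (Fin.ext (show i = k - 1 by omega))
    rw [fibAdjMatrixR, if_pos hA, if_pos hp, if_pos hsfy]
    norm_num
  · -- no y exists
    have key : (Cmat k * Bmat k) m n = 0 := by
      rw [Matrix.mul_apply]
      apply Finset.sum_eq_zero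
      intro y _
      rcases Classical.em (preFun y.1 = m.1 ∧ n.1 = suffFun y.1) with ⟨h1, h2⟩ | h3
      · exfalso; apply hA
        constructor
        · intro i h
          have hi1 : (i : ℕ) + 1 < k + 1 := Nat.succ_lt_succ (Nat.lt_of_succ_lt h)
          have e2 := congrFun h2 ⟨i, Nat.lt_of_succ_lt h⟩
          have e1 := congrFun h1 ⟨i+1, h⟩
          simp only [suffFun, Fin.succ] at e2
          simp only [preFun, Fin.castSucc, Fin.castAdd, Fin.castLE] at e1
          rw [e2, ← e1]
        · intro h0 hne
          have e1 := congrFun h1 ⟨k-1, Nat.sub_lt hk Nat.one_pos⟩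
          have e2 := congrFun h2 ⟨k-1, Nat.sub_lt hk Nat.one_pos⟩
          simp only [preFun, Fin.castSucc, Fin.castAdd, Fin.castLE] at e1
          simp only [suffFun, Fin.succ] at e2
          -- y.1 ⟨k-1⟩ = m.1 ⟨k-1⟩ ≠ 0, so y.1 ⟨k-1+1⟩ = y.1 ⟨k-1⟩ + 1
          have hyne : y.1 ⟨k-1, by omega⟩ ≠ 0 := by
            rw [e1]; exact hne
          have := y.2 (k-1) (by omega) hyne
          rw [e2, this, e1]
      · rcases Classical.em (preFun y.1 = m.1) with h1 | h1
        · have h2 : n.1 ≠ suffFun y.1 := fun h => h3 ⟨h1, h⟩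
          simp [Cmat, Bmat, h2]
        · simp [Cmat, Bmat, h1]
    rw [key, fibAdjMatrixR, if_neg hA]

lemma bc_pow {α β : Type*} [Fintype α] [Fintype β] [DecidableEq α] [DecidableEq β]
    (B : Matrix α β ℝ) (C : Matrix β α ℝ) :
    ∀ l : ℕ, (B * C) ^ (l + 1) = B * ((C * B) ^ l * C) := by
  intro l
  induction l with
  | zero => simp [Matrix.mul_assoc]
  | succ l ih =>
      rw [pow_succ, ih, pow_succ]
      simp only [Matrix.mul_assoc]

lemma trace_bc_cb {α β : Type*} [Fintype α] [Fintype β] [DecidableEq α] [DecidableEq β]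
    (B : Matrix α β ℝ) (C : Matrix β α ℝ) (l : ℕ) :
    Matrix.trace ((B * C) ^ (l + 1)) = Matrix.trace ((C * B) ^ (l + 1)) := by
  rw [bc_pow, Matrix.trace_mul_comm, pow_succ]
  rw [Matrix.mul_assoc]

/-! The base case k = 1. -/

noncomputable def Mgold : Matrix (Fin 2) (Fin 2) ℝ := !![1, 1; 1, 0]

lemma Mgold_sq : Mgold ^ 2 = Mgold + 1 := by
  rw [pow_two]
  ext i j
  fin_cases i <;> fin_cases j <;>
    simp [Mgold, Matrix.mul_apply, Fin.sum_univ_two, Matrix.one_apply]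

lemma trace_Mgold : Matrix.trace Mgold = 1 := by
  simp [Matrix.trace_fin_two, Mgold]

noncomputable def phiR : ℝ := (1 + Real.sqrt 5) / 2
noncomputable def psiR : ℝ := (1 - Real.sqrt 5) / 2

lemma sqrt5_sq : Real.sqrt 5 ^ 2 = 5 := Real.sq_sqrt (by norm_num)

lemma phi_sq : phiR ^ 2 = phiR + 1 := by
  unfold phiR; linear_combination sqrt5_sq / 4

lemma psi_sq : psiR ^ 2 = psiR + 1 := by
  unfold psiR; linear_combination sqrt5_sq / 4

lemma trace_Mgold_pow : ∀ l : ℕ,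
    Matrix.trace (Mgold ^ (l + 1)) = phiR ^ (l + 1) + psiR ^ (l + 1) ∧
    Matrix.trace (Mgold ^ (l + 2)) = phiR ^ (l + 2) + psiR ^ (l + 2) := by
  intro l
  induction l with
  | zero =>
      constructor
      · rw [pow_one, pow_one, pow_one, trace_Mgold]
        unfold phiR psiR; ring
      · rw [Mgold_sq, phi_sq, psi_sq, Matrix.trace_add, trace_Mgold, Matrix.trace_one]
        simp only [Fintype.card_fin]
        unfold phiR psiR; push_cast; ring
  | succ l ih =>
      refine ⟨ih.2, ?_⟩
      have hM : Mgold ^ (l + 3) = Mgold ^ (l + 2) + Mgold ^ (l + 1) := by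
        rw [show Mgold ^ (l + 3) = Mgold ^ (l + 1) * Mgold ^ 2 from pow_add Mgold (l+1) 2,
          Mgold_sq, mul_add, mul_one, ← pow_succ]
      have hphi : phiR ^ (l + 3) = phiR ^ (l + 2) + phiR ^ (l + 1) := by
        rw [show phiR ^ (l + 3) = phiR ^ (l + 1) * phiR ^ 2 from pow_add phiR (l+1) 2,
          phi_sq, mul_add, mul_one, ← pow_succ]
      have hpsi : psiR ^ (l + 3) = psiR ^ (l + 2) + psiR ^ (l + 1) := by
        rw [show psiR ^ (l + 3) = psiR ^ (l + 1) * psiR ^ 2 from pow_add psiR (l+1) 2,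
          psi_sq, mul_add, mul_one, ← pow_succ]
      rw [show l + 1 + 2 = l + 3 from rfl, hM, Matrix.trace_add, ih.1, ih.2, hphi, hpsi]
      ring

noncomputable def eV1 : Fin 2 ≃ FibV 1 where
  toFun a := ⟨fun _ => a, by intro i h; omega⟩
  invFun x := x.1 0
  left_inv a := rfl
  right_inv x := by
    apply Subtype.ext
    funext i
    have : i = 0 := Subsingleton.elim i 0
    rw [this]

lemma adj1_eq : fibAdjMatrixR 1 = Mgold.submatrix eV1.symm eV1.symm := by
  funext x y
  have harc : fibArc 2 1 x.1 y.1 ↔ (x.1 0 ≠ 0 → y.1 0 = x.1 0 + 1) := by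
    constructor
    · rintro ⟨_, h2⟩
      intro hne
      have := h2 Nat.one_pos
      convert this hne using 2 <;> simp [Fin.ext_iff]
    · intro h
      refine ⟨fun i hi => by omega, fun h0 hne => ?_⟩
      have e : (⟨1 - 1, Nat.sub_lt h0 Nat.one_pos⟩ : Fin 1) = 0 := by
        simp [Fin.ext_iff]
      rw [e] at hne ⊢
      exact h hne
  have hM : fibAdjMatrixR 1 x y = if (x.1 0 ≠ 0 → y.1 0 = x.1 0 + 1) then (1:ℝ) else 0 := by
    rw [fibAdjMatrixR]
    by_cases h : fibArc 2 1 x.1 y.1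
    · rw [if_pos h, if_pos (harc.mp h)]
    · rw [if_neg h, if_neg (fun hh => h (harc.mpr hh))]
  rw [hM]
  have ex : eV1.symm x = x.1 0 := rfl
  have ey : eV1.symm y = y.1 0 := rfl
  simp only [Matrix.submatrix_apply, ex, ey]
  rcases zmod2_cases (x.1 0) with hx | hx <;> rcases zmod2_cases (y.1 0) with hy | hy <;>
    rw [hx, hy]
  · rw [if_pos (by decide)]; norm_num [Mgold]; rfl
  · rw [if_pos (by decide)]; norm_num [Mgold]; rfl
  · rw [if_pos (by decide)]; norm_num [Mgold]; rfl
  · rw [if_neg (by decide)]; norm_num [Mgold]; rfl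

lemma trace_adj1 (l : ℕ) :
    Matrix.trace (fibAdjMatrixR 1 ^ l) = Matrix.trace (Mgold ^ l) := by
  rw [adj1_eq]
  have hsub : Mgold.submatrix eV1.symm eV1.symm = Matrix.reindexAlgEquiv ℝ ℝ eV1 Mgold := rfl
  rw [hsub, ← map_pow]
  have : (Matrix.reindexAlgEquiv ℝ ℝ eV1 (Mgold ^ l)) = (Mgold ^ l).submatrix eV1.symm eV1.symm := rfl
  rw [this]
  simp only [Matrix.trace, Matrix.diag, Matrix.submatrix_apply]
  exact Fintype.sum_equiv eV1.symm _ _ (fun x => rfl)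

/-- for l ≥ 1, the number of closed l-walks of F(2,k) is
C_l(2,k) = φ^l + ψ^l, where φ = (1+√5)/2 and ψ = (1−√5)/2. -/
theorem fib_closed_walks_golden (k l : ℕ) (hk : 1 ≤ k) (hl : 1 ≤ l) :
    Matrix.trace (fibAdjMatrixR k ^ l) =
      ((1 + Real.sqrt 5) / 2) ^ l + ((1 - Real.sqrt 5) / 2) ^ l := by
  obtain ⟨l, rfl⟩ : ∃ l', l = l' + 1 := ⟨l - 1, (Nat.succ_pred_eq_of_pos hl).symm⟩
  have key : ∀ k : ℕ, 1 ≤ k →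
      Matrix.trace (fibAdjMatrixR k ^ (l + 1)) = Matrix.trace (Mgold ^ (l + 1)) := by
    intro k hk
    induction k with
    | zero => omega
    | succ k ih =>
        rcases Nat.eq_or_lt_of_le hk with h1 | h1
        · rw [← h1]
          exact trace_adj1 (l + 1)
        · have hk' : 1 ≤ k := by omega
          rw [factor1 hk', trace_bc_cb, ← factor2 hk']
          exact ih hk'
  rw [key k hk]
  have := (trace_Mgold_pow l).1
  rw [this]
  rw [phiR, psiR]
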